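/- Let α : V → W be ℂ-linear and β : V → V* ℂ-linear with β(U)(U') = −β(U')(U) for all U, U' ∈ V. Set B := β − ⟨α⊗α⟩, where ⟨α⊗α⟩(U)(U') := ⟨α(U), α(U')⟩, and let Ψ : E → E be the linear automorphism Ψ(U + r + ξ) := U + (r + α(U)) + (ξ + B(U) − 2⟨α(·), r⟩), where ⟨α(·),r⟩ denotes the covector U' ↦ ⟨α(U'), r⟩. Define positive-definite Hermitian inner products on E by 𝐆(Ψq, Ψq') := D(g)(q,q') and 𝐆̃ := D(g̃). Then tr_𝐆 𝐆̃ = tr_𝐆̃ 𝐆 = tr_g g̃ + tr_{g̃} g + |α|²_g + |α|²_{g̃} + (1/4)|B|²_{g,g̃} + m, where |α|²_h := Σ_i k(α(v_i), α(v_i)) over an h-orthonormal basis (v_i) of V (for h = g or g̃), and |B|²_{g,g̃} := Σ_i g̃*(B(v_i), B(v_i)) over a g-orthonormal basis (v_i) of V. In particular tr_𝐆 𝐆̃ ≥ 2n + m, with equality if and only if g = g̃, α = 0 and β = 0. -/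

import Mathlib

/-!
Fibrewise model of generalized Hermitian metrics on a holomorphic string algebroid
`E = V ⊕ W ⊕ V*`, with `W` the complexification of a negative-definite quadratic real
vector space: the trace identity
`tr_𝐆 𝐆̃ = tr_𝐆̃ 𝐆 = tr_g g̃ + tr_g̃ g + |α|²_g + |α|²_{g̃} + (1/4)|B|²_{g,g̃} + m`
and the lower bound `tr_𝐆 𝐆̃ ≥ 2n + m` with equality iff `g = g̃`, `α = 0`, `β = 0`.
-/

namespace Stmt10

open scoped BigOperators

/-- A positive-definite Hermitian inner product (linear in the first argument,
conjugate-linear in the second). -/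
structure HermIP (V : Type*) [AddCommGroup V] [Module ℂ V] where
  form : V → V → ℂ
  add_left : ∀ x y z : V, form (x + y) z = form x z + form y z
  smul_left : ∀ (c : ℂ) (x y : V), form (c • x) y = c * form x y
  conj_symm : ∀ x y : V, form y x = starRingEnd ℂ (form x y)
  posdef : ∀ x : V, x ≠ 0 → 0 < (form x x).re

/-! ### A small library on sesquilinear forms -/

structure Sesq (M : Type*) [AddCommGroup M] [Module ℂ M] where
  form : M → M → ℂ
  add_left : ∀ x y z : M, form (x + y) z = form x z + form y z
  smul_left : ∀ (c : ℂ) (x y : M), form (c • x) y = c * form x y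
  conj_symm : ∀ x y : M, form y x = starRingEnd ℂ (form x y)

namespace Sesq

variable {M : Type*} [AddCommGroup M] [Module ℂ M] (S : Sesq M)

theorem zero_left (y : M) : S.form 0 y = 0 := by
  have h := S.add_left 0 0 y
  rw [add_zero] at h
  have h2 : S.form 0 y + 0 = S.form 0 y + S.form 0 y := by rw [add_zero]; exact h
  exact (add_left_cancel h2).symm

theorem zero_right (x : M) : S.form x 0 = 0 := by
  rw [S.conj_symm, zero_left, map_zero]

theorem add_right (x y z : M) : S.form x (y + z) = S.form x y + S.form x z := by
  rw [S.conj_symm, S.add_left, map_add, ← S.conj_symm, ← S.conj_symm]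

theorem smul_right (c : ℂ) (x y : M) :
    S.form x (c • y) = starRingEnd ℂ c * S.form x y := by
  rw [S.conj_symm, S.smul_left, map_mul, ← S.conj_symm]

theorem neg_left (x y : M) : S.form (-x) y = -S.form x y := by
  have := S.smul_left (-1) x y; simpa using this

theorem neg_right (x y : M) : S.form x (-y) = -S.form x y := by
  have := S.smul_right (-1) x y; simpa using this

theorem sub_left (x y z : M) : S.form (x - y) z = S.form x z - S.form y z := by
  rw [sub_eq_add_neg, S.add_left, S.neg_left, sub_eq_add_neg]

theorem sum_left {ι : Type*} (s : Finset ι) (f : ι → M) (y : M) :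
    S.form (∑ i ∈ s, f i) y = ∑ i ∈ s, S.form (f i) y := by
  classical
  induction s using Finset.induction_on with
  | empty => simp [S.zero_left]
  | insert a s' h ih => simp [Finset.sum_insert h, S.add_left, ih]

theorem sum_right {ι : Type*} (s : Finset ι) (f : ι → M) (x : M) :
    S.form x (∑ i ∈ s, f i) = ∑ i ∈ s, S.form x (f i) := by
  rw [S.conj_symm, S.sum_left, map_sum]
  simp [← S.conj_symm]

theorem self_re (x : M) : (S.form x x : ℂ) = ((S.form x x).re : ℂ) :=
  (Complex.conj_eq_iff_re.mp (S.conj_symm x x).symm).symm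

/-- Rescaling a sesquilinear form by a real number. -/
noncomputable def rescale (t : ℝ) : Sesq M where
  form x y := (t : ℂ) * S.form x y
  add_left x y z := by
    show (t : ℂ) * S.form (x + y) z = (t : ℂ) * S.form x z + (t : ℂ) * S.form y z
    rw [S.add_left]; ring
  smul_left c x y := by
    show (t : ℂ) * S.form (c • x) y = c * ((t : ℂ) * S.form x y)
    rw [S.smul_left]; ring
  conj_symm x y := by
    show (t : ℂ) * S.form y x = starRingEnd ℂ ((t : ℂ) * S.form x y)
    rw [S.conj_symm, map_mul, Complex.conj_ofReal]

variable {ι : Type*} [Fintype ι] [DecidableEq ι]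

theorem repr_eq (b : Module.Basis ι ℂ M)
    (hb : ∀ i j, S.form (b i) (b j) = if i = j then 1 else 0) (x : M) (i : ι) :
    b.repr x i = S.form x (b i) := by
  have h : S.form x (b i) = ∑ j, b.repr x j * S.form (b j) (b i) := by
    conv_lhs => rw [← b.sum_repr x]
    rw [S.sum_left]
    exact Finset.sum_congr rfl fun j _ => S.smul_left _ _ _
  rw [h]
  simp [hb, Finset.sum_ite_eq']

theorem expand (b : Module.Basis ι ℂ M)
    (hb : ∀ i j, S.form (b i) (b j) = if i = j then 1 else 0) (x : M) :
    x = ∑ i, S.form x (b i) • b i := by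
  conv_lhs => rw [← b.sum_repr x]
  exact Finset.sum_congr rfl fun i _ => by rw [S.repr_eq b hb]

theorem parseval (b : Module.Basis ι ℂ M)
    (hb : ∀ i j, S.form (b i) (b j) = if i = j then 1 else 0) (x : M) :
    S.form x x = ∑ i, S.form x (b i) * starRingEnd ℂ (S.form x (b i)) := by
  have hx := S.expand b hb x
  conv_lhs => rw [hx]
  rw [S.sum_left]
  refine Finset.sum_congr rfl fun i _ => ?_
  rw [S.smul_left, S.sum_right]
  simp only [S.smul_right, hb]
  rw [Finset.sum_eq_single i]
  · simp
  · intro j _ hj; simp [if_neg (Ne.symm hj), hj]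
  · intro hi; exact absurd (Finset.mem_univ i) hi

theorem linearIndependent_of_ON (u : ι → M)
    (hu : ∀ i j, S.form (u i) (u j) = if i = j then 1 else 0) :
    LinearIndependent ℂ u := by
  rw [Fintype.linearIndependent_iff]
  intro c hc i
  have h : S.form (∑ j, c j • u j) (u i) = 0 := by rw [hc, S.zero_left]
  rw [S.sum_left] at h
  simp only [S.smul_left] at h
  simpa [hu, Finset.sum_ite_eq'] using h

theorem trace_indep {ιa ιb : Type*} [Fintype ιa] [Fintype ιb]
    [DecidableEq ιa] [DecidableEq ιb]
    (H : Sesq M) (e : Module.Basis ιa ℂ M) (f : Module.Basis ιb ℂ M)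
    (he : ∀ a b, S.form (e a) (e b) = if a = b then 1 else 0)
    (hf : ∀ a b, S.form (f a) (f b) = if a = b then 1 else 0) :
    ∑ a, H.form (e a) (e a) = ∑ b, H.form (f b) (f b) := by
  classical
  set c : ιa → ιb → ℂ := fun a b => S.form (e a) (f b) with hcdef
  have hexp : ∀ a, e a = ∑ b, c a b • f b := fun a => S.expand f hf (e a)
  have key : ∀ b b', (∑ a, c a b * starRingEnd ℂ (c a b')) = if b = b' then 1 else 0 := by
    intro b b'
    have h1 : S.form (f b) (f b') = ∑ a, starRingEnd ℂ (c a b) * c a b' := by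
      conv_lhs => rw [S.expand e he (f b)]
      rw [S.sum_left]
      refine Finset.sum_congr rfl fun a _ => ?_
      rw [S.smul_left, S.conj_symm (e a) (f b)]
    have h2 : starRingEnd ℂ (S.form (f b) (f b')) =
        ∑ a, c a b * starRingEnd ℂ (c a b') := by
      rw [h1, map_sum]
      refine Finset.sum_congr rfl fun a _ => ?_
      rw [map_mul, Complex.conj_conj]
    rw [← S.conj_symm] at h2
    rw [hf] at h2
    rw [← h2]
    by_cases hbb : b = b' <;> simp [hbb, eq_comm]
  calc ∑ a, H.form (e a) (e a)
      = ∑ a, ∑ b, ∑ b', c a b * (starRingEnd ℂ (c a b') * H.form (f b) (f b')) := by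
        refine Finset.sum_congr rfl fun a _ => ?_
        conv_lhs => rw [hexp a]
        rw [H.sum_left]
        refine Finset.sum_congr rfl fun b _ => ?_
        rw [H.smul_left, H.sum_right, Finset.mul_sum]
        exact Finset.sum_congr rfl fun b' _ => by rw [H.smul_right]
    _ = ∑ b, ∑ b', (∑ a, c a b * starRingEnd ℂ (c a b')) * H.form (f b) (f b') := by
        rw [Finset.sum_comm]
        refine Finset.sum_congr rfl fun b _ => ?_
        rw [Finset.sum_comm]
        refine Finset.sum_congr rfl fun b' _ => ?_
        rw [Finset.sum_mul]
        exact Finset.sum_congr rfl fun a _ => by ring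
    _ = ∑ b, H.form (f b) (f b) := by
        refine Finset.sum_congr rfl fun b _ => ?_
        simp only [key]
        rw [Finset.sum_eq_single b]
        · simp
        · intro j _ hj
          rw [if_neg fun h => hj h.symm, zero_mul]
        · intro h; exact absurd (Finset.mem_univ b) h

theorem sum_ON_diag (b : ι → M)
    (hb : ∀ i j, S.form (b i) (b j) = if i = j then 1 else 0) :
    ∑ i, S.form (b i) (b i) = (Fintype.card ι : ℂ) := by
  have h : ∀ i, S.form (b i) (b i) = 1 := fun i => by simp [hb]
  simp [h, Finset.card_univ]

end Sesq

variable {V W : Type*} [AddCommGroup V] [Module ℂ V] [FiniteDimensional ℂ V]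
  [AddCommGroup W] [Module ℂ W] [FiniteDimensional ℂ W]

/-- The fibre `E = V ⊕ W ⊕ V*`. -/
abbrev E (V W : Type*) [AddCommGroup V] [Module ℂ V] [AddCommGroup W] [Module ℂ W] :=
  V × W × Module.Dual ℂ V

/-- The positive-definite Hermitian inner product `k(x,y) := −⟨x, ȳ⟩` on `W`. -/
noncomputable def kform (bil : W →ₗ[ℂ] W →ₗ[ℂ] ℂ) (conjW : W → W) (x y : W) : ℂ :=
  -(bil x (conjW y))

/-- The map `B := β − ⟨α⊗α⟩`, i.e. `B(U)(U') = β(U)(U') − ⟨α(U), α(U')⟩`. -/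
noncomputable def Bmap (bil : W →ₗ[ℂ] W →ₗ[ℂ] ℂ) (α : V →ₗ[ℂ] W)
    (β : V →ₗ[ℂ] Module.Dual ℂ V) (U : V) : Module.Dual ℂ V :=
  β U - (bil (α U)).comp α

/-- The automorphism `Ψ(U + r + ξ) := U + (r + α(U)) + (ξ + B(U) − 2⟨α(·), r⟩)`. -/
noncomputable def Psi (bil : W →ₗ[ℂ] W →ₗ[ℂ] ℂ) (α : V →ₗ[ℂ] W)
    (β : V →ₗ[ℂ] Module.Dual ℂ V) (u : E V W) : E V W :=
  (u.1, u.2.1 + α u.1,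
    u.2.2 + Bmap bil α β u.1 - (2 : ℂ) • ((bil.flip u.2.1).comp α))

/-- The induced Hermitian inner product `h*` on the dual, `h*(ξ,η) = h(w_η, w_ξ)`,
where `w : ξ ↦ w_ξ` is the Riesz map of `h` (so that `ξ = h(·, w_ξ)`). -/
noncomputable def dualForm (h : HermIP V) (w : Module.Dual ℂ V → V)
    (ξ η : Module.Dual ℂ V) : ℂ :=
  h.form (w η) (w ξ)

/-- The Hermitian inner product `D(h)` on `E = V ⊕ W ⊕ V*`:
`D(h)(U+r+ξ, U'+r'+ξ') = h(U,U') + k(r,r') + (1/4) h*(ξ,ξ')`. -/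
noncomputable def Dform (bil : W →ₗ[ℂ] W →ₗ[ℂ] ℂ) (conjW : W → W)
    (h : HermIP V) (w : Module.Dual ℂ V → V) (u v : E V W) : ℂ :=
  h.form u.1 v.1 + kform bil conjW u.2.1 v.2.1 + (1 / 4 : ℂ) * dualForm h w u.2.2 v.2.2

/-- The underlying sesquilinear form of a Hermitian inner product. -/
def HermIP.sesq (h : HermIP V) : Sesq V := ⟨h.form, h.add_left, h.smul_left, h.conj_symm⟩

theorem HermIP.add_right (h : HermIP V) (x y z : V) :
    h.form x (y + z) = h.form x y + h.form x z := h.sesq.add_right x y z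

theorem HermIP.smul_right (h : HermIP V) (c : ℂ) (x y : V) :
    h.form x (c • y) = starRingEnd ℂ c * h.form x y := h.sesq.smul_right c x y

theorem HermIP.neg_right (h : HermIP V) (x y : V) :
    h.form x (-y) = -h.form x y := h.sesq.neg_right x y

theorem HermIP.sum_right (h : HermIP V) {ι : Type*} (s : Finset ι) (f : ι → V) (x : V) :
    h.form x (∑ i ∈ s, f i) = ∑ i ∈ s, h.form x (f i) := h.sesq.sum_right s f x

theorem HermIP.sum_left (h : HermIP V) {ι : Type*} (s : Finset ι) (f : ι → V) (y : V) :
    h.form (∑ i ∈ s, f i) y = ∑ i ∈ s, h.form (f i) y := h.sesq.sum_left s f y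

theorem HermIP.zero_left (h : HermIP V) (y : V) : h.form 0 y = 0 := h.sesq.zero_left y

theorem HermIP.zero_right (h : HermIP V) (x : V) : h.form x 0 = 0 := h.sesq.zero_right x

theorem HermIP.eq_of_forall (h : HermIP V) {y y' : V}
    (H : ∀ x, h.form x y = h.form x y') : y = y' := by
  by_contra hne
  have hd : h.form (y - y') (y - y') = 0 := by
    have h1 : h.form (y - y') (y - y')
        = h.form y (y - y') - h.form y' (y - y') := h.sesq.sub_left y y' (y - y')
    rw [h1, sub_eq_add_neg y y', h.add_right, h.add_right,
      h.neg_right, h.neg_right, ← H y, H y']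
    ring
  have := h.posdef (y - y') (sub_ne_zero.mpr hne)
  rw [hd] at this
  simp at this

theorem HermIP.expand (h : HermIP V) {ι : Type*} [Fintype ι] [DecidableEq ι]
    (b : Module.Basis ι ℂ V) (hb : ∀ i j, h.form (b i) (b j) = if i = j then 1 else 0) (x : V) :
    x = ∑ i, h.form x (b i) • b i := h.sesq.expand b hb x

theorem HermIP.parseval (h : HermIP V) {ι : Type*} [Fintype ι] [DecidableEq ι]
    (b : Module.Basis ι ℂ V) (hb : ∀ i j, h.form (b i) (b j) = if i = j then 1 else 0) (x : V) :
    h.form x x = ∑ i, h.form x (b i) * starRingEnd ℂ (h.form x (b i)) :=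
  h.sesq.parseval b hb x

section Aux

variable (bil : W →ₗ[ℂ] W →ₗ[ℂ] ℂ) (conjW : W → W)

theorem kform_add_left (x y z : W) :
    kform bil conjW (x + y) z = kform bil conjW x z + kform bil conjW y z := by
  simp [kform]; ring

theorem kform_smul_left (c : ℂ) (x y : W) :
    kform bil conjW (c • x) y = c * kform bil conjW x y := by
  simp [kform]

/-- `kform` as a sesquilinear form. -/
noncomputable def kSesq
    (hk : ∀ x y : W, kform bil conjW y x = starRingEnd ℂ (kform bil conjW x y)) : Sesq W :=
  ⟨kform bil conjW, kform_add_left bil conjW, kform_smul_left bil conjW, hk⟩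

section Riesz

variable (g : HermIP V) (wg : Module.Dual ℂ V → V)

theorem wg_add (hwg : ∀ (ξ : Module.Dual ℂ V) (x : V), ξ x = g.form x (wg ξ))
    (ξ η : Module.Dual ℂ V) : wg (ξ + η) = wg ξ + wg η := by
  refine g.eq_of_forall fun x => ?_
  rw [← hwg, g.add_right, ← hwg, ← hwg]
  simp

theorem wg_smul (hwg : ∀ (ξ : Module.Dual ℂ V) (x : V), ξ x = g.form x (wg ξ))
    (c : ℂ) (ξ : Module.Dual ℂ V) : wg (c • ξ) = starRingEnd ℂ c • wg ξ := by
  refine g.eq_of_forall fun x => ?_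
  rw [← hwg, g.smul_right, Complex.conj_conj, ← hwg]
  simp

theorem dualForm_add_left (hwg : ∀ (ξ : Module.Dual ℂ V) (x : V), ξ x = g.form x (wg ξ))
    (ξ η ζ : Module.Dual ℂ V) :
    dualForm g wg (ξ + η) ζ = dualForm g wg ξ ζ + dualForm g wg η ζ := by
  unfold dualForm
  rw [wg_add g wg hwg, g.add_right]

theorem dualForm_smul_left (hwg : ∀ (ξ : Module.Dual ℂ V) (x : V), ξ x = g.form x (wg ξ))
    (c : ℂ) (ξ η : Module.Dual ℂ V) :
    dualForm g wg (c • ξ) η = c * dualForm g wg ξ η := by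
  unfold dualForm
  rw [wg_smul g wg hwg, g.smul_right, Complex.conj_conj]

theorem dualForm_conj (ξ η : Module.Dual ℂ V) :
    dualForm g wg η ξ = starRingEnd ℂ (dualForm g wg ξ η) := g.conj_symm _ _

/-- The dual form as a sesquilinear form. -/
noncomputable def dualSesq (hwg : ∀ (ξ : Module.Dual ℂ V) (x : V), ξ x = g.form x (wg ξ)) :
    Sesq (Module.Dual ℂ V) :=
  ⟨dualForm g wg, dualForm_add_left g wg hwg, dualForm_smul_left g wg hwg, dualForm_conj g wg⟩

variable {ι : Type*} [Fintype ι] [DecidableEq ι]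

theorem dualForm_eval (hwg : ∀ (ξ : Module.Dual ℂ V) (x : V), ξ x = g.form x (wg ξ))
    (b : Module.Basis ι ℂ V)
    (hb : ∀ i j, g.form (b i) (b j) = if i = j then 1 else 0)
    (ξ η : Module.Dual ℂ V) :
    dualForm g wg ξ η = ∑ i, ξ (b i) * starRingEnd ℂ (η (b i)) := by
  have hcoef : ∀ (ζ : Module.Dual ℂ V) (i : ι),
      g.form (wg ζ) (b i) = starRingEnd ℂ (ζ (b i)) := by
    intro ζ i
    rw [g.conj_symm (b i) (wg ζ), ← hwg]
  have hwξ : wg ξ = ∑ i, starRingEnd ℂ (ξ (b i)) • b i := by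
    conv_lhs => rw [g.expand b hb (wg ξ)]
    refine Finset.sum_congr rfl fun i _ => ?_
    rw [hcoef ξ i]
  show g.form (wg η) (wg ξ) = _
  conv_lhs => rw [hwξ]
  rw [g.sum_right]
  refine Finset.sum_congr rfl fun i _ => ?_
  have : g.form (wg η) (starRingEnd ℂ (ξ (b i)) • b i)
      = starRingEnd ℂ (starRingEnd ℂ (ξ (b i))) * g.form (wg η) (b i) := g.smul_right _ _ _
  rw [this, Complex.conj_conj, hcoef η i]

end Riesz

/-- `Dform` as a sesquilinear form. -/
noncomputable def DSesq
    (hk : ∀ x y : W, kform bil conjW y x = starRingEnd ℂ (kform bil conjW x y))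
    (h : HermIP V) (w : Module.Dual ℂ V → V)
    (hw : ∀ (ξ : Module.Dual ℂ V) (x : V), ξ x = h.form x (w ξ)) : Sesq (E V W) where
  form := Dform bil conjW h w
  add_left u v z := by
    show h.form (u.1 + v.1) z.1 + kform bil conjW (u.2.1 + v.2.1) z.2.1
        + (1 / 4 : ℂ) * dualForm h w (u.2.2 + v.2.2) z.2.2
        = Dform bil conjW h w u z + Dform bil conjW h w v z
    unfold Dform
    rw [h.add_left, kform_add_left, dualForm_add_left h w hw]
    ring
  smul_left c u z := by
    show h.form (c • u.1) z.1 + kform bil conjW (c • u.2.1) z.2.1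
        + (1 / 4 : ℂ) * dualForm h w (c • u.2.2) z.2.2
        = c * Dform bil conjW h w u z
    unfold Dform
    rw [h.smul_left, kform_smul_left, dualForm_smul_left h w hw]
    ring
  conj_symm u v := by
    have h4 : (starRingEnd ℂ) (1 / 4 : ℂ) = 1 / 4 := by
      rw [show ((1 : ℂ) / 4) = (((1 / 4 : ℝ) : ℂ)) by norm_num, Complex.conj_ofReal]
    unfold Dform
    rw [map_add, map_add, map_mul, h4, ← h.conj_symm u.1 v.1, ← hk u.2.1 v.2.1,
      ← dualForm_conj h w u.2.2 v.2.2]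

end Aux

section PsiLemmas

variable (bil : W →ₗ[ℂ] W →ₗ[ℂ] ℂ) (α : V →ₗ[ℂ] W) (β : V →ₗ[ℂ] Module.Dual ℂ V)

theorem Psi_add (u v : E V W) :
    Psi bil α β (u + v) = Psi bil α β u + Psi bil α β v := by
  unfold Psi Bmap
  refine Prod.ext ?_ (Prod.ext ?_ ?_)
  · rfl
  · show (u + v).2.1 + α (u + v).1 = u.2.1 + α u.1 + (v.2.1 + α v.1)
    simp only [Prod.fst_add, Prod.snd_add, map_add]
    abel
  · apply LinearMap.ext
    intro x
    simp only [Prod.fst_add, Prod.snd_add, map_add, LinearMap.add_apply, LinearMap.sub_apply,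
      LinearMap.smul_apply, LinearMap.comp_apply, LinearMap.flip_apply, smul_eq_mul]
    ring

theorem Psi_smul (c : ℂ) (u : E V W) :
    Psi bil α β (c • u) = c • Psi bil α β u := by
  unfold Psi Bmap
  refine Prod.ext ?_ (Prod.ext ?_ ?_)
  · rfl
  · show (c • u).2.1 + α (c • u).1 = c • (u.2.1 + α u.1)
    simp only [Prod.smul_fst, Prod.smul_snd, map_smul, smul_add]
  · apply LinearMap.ext
    intro x
    simp only [Prod.smul_fst, Prod.smul_snd, map_smul, LinearMap.add_apply, LinearMap.sub_apply,
      LinearMap.smul_apply, LinearMap.comp_apply, LinearMap.flip_apply, smul_eq_mul]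
    ring

theorem Psi_inv (hbil_symm : ∀ x y : W, bil x y = bil y x) (u : E V W) :
    Psi bil (-α) (-β) (Psi bil α β u) = u := by
  unfold Psi Bmap
  refine Prod.ext ?_ (Prod.ext ?_ ?_)
  · rfl
  · show u.2.1 + α u.1 + (-α) u.1 = u.2.1
    simp
  · apply LinearMap.ext
    intro x
    simp only [LinearMap.add_apply, LinearMap.sub_apply, LinearMap.smul_apply,
      LinearMap.comp_apply, LinearMap.flip_apply, LinearMap.neg_apply, map_add, map_neg,
      smul_eq_mul]
    rw [hbil_symm (α x) (α u.1)]
    ring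

/-- `Ψ` as a linear automorphism of `E`. -/
noncomputable def PsiEquiv (hbil_symm : ∀ x y : W, bil x y = bil y x) :
    E V W ≃ₗ[ℂ] E V W where
  toFun := Psi bil α β
  invFun := Psi bil (-α) (-β)
  map_add' := Psi_add bil α β
  map_smul' := Psi_smul bil α β
  left_inv u := Psi_inv bil α β hbil_symm u
  right_inv u := by
    have h := Psi_inv bil (-α) (-β) hbil_symm u
    simpa using h

theorem Psi_apply_V (U : V) :
    Psi bil α β ((U, 0, 0) : E V W) = (U, α U, Bmap bil α β U) := by
  unfold Psi
  refine Prod.ext rfl (Prod.ext ?_ ?_)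
  · show (0 : W) + α U = α U
    rw [zero_add]
  · show (0 : Module.Dual ℂ V) + Bmap bil α β U - (2 : ℂ) • ((bil.flip 0).comp α) = _
    rw [map_zero, LinearMap.zero_comp, smul_zero, sub_zero, zero_add]

theorem Psi_apply_W (r : W) :
    Psi bil α β ((0, r, 0) : E V W) = (0, r, -((2 : ℂ) • ((bil.flip r).comp α))) := by
  unfold Psi
  refine Prod.ext rfl (Prod.ext ?_ ?_)
  · show r + α 0 = r
    rw [map_zero, add_zero]
  · show (0 : Module.Dual ℂ V) + Bmap bil α β 0 - (2 : ℂ) • ((bil.flip r).comp α) = _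
    have hB : Bmap bil α β 0 = 0 := by
      unfold Bmap
      rw [map_zero, map_zero, map_zero, LinearMap.zero_comp, sub_zero]
    rw [hB, add_zero, zero_sub]

theorem Psi_apply_X (ξ : Module.Dual ℂ V) :
    Psi bil α β ((0, 0, ξ) : E V W) = (0, 0, ξ) := by
  unfold Psi
  refine Prod.ext rfl (Prod.ext ?_ ?_)
  · show (0 : W) + α 0 = 0
    rw [map_zero, add_zero]
  · show ξ + Bmap bil α β 0 - (2 : ℂ) • ((bil.flip 0).comp α) = ξ
    have hB : Bmap bil α β 0 = 0 := by
      unfold Bmap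
      rw [map_zero, map_zero, map_zero, LinearMap.zero_comp, sub_zero]
    rw [hB, add_zero, map_zero, LinearMap.zero_comp, smul_zero, sub_zero]

end PsiLemmas

section Bases

variable (bil : W →ₗ[ℂ] W →ₗ[ℂ] ℂ) (conjW : W → W)

theorem kform_zero_zero : kform bil conjW 0 0 = 0 := by
  simp [kform]

theorem conjW_zero (hconj_add : ∀ x y : W, conjW (x + y) = conjW x + conjW y) :
    conjW 0 = 0 := by
  have h := hconj_add 0 0
  rw [add_zero] at h
  have h2 : conjW 0 + 0 = conjW 0 + conjW 0 := by rw [add_zero]; exact h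
  exact (add_left_cancel h2).symm

theorem conjW_sum (hconj_add : ∀ x y : W, conjW (x + y) = conjW x + conjW y)
    {ι : Type*} (s : Finset ι) (f : ι → W) :
    conjW (∑ i ∈ s, f i) = ∑ i ∈ s, conjW (f i) := by
  classical
  induction s using Finset.induction_on with
  | empty => simpa using conjW_zero conjW hconj_add
  | insert a s' h ih =>
    rw [Finset.sum_insert h, hconj_add, ih, Finset.sum_insert h]

theorem bil_conj_conj (hbil_symm : ∀ x y : W, bil x y = bil y x)
    (hconj_invol : ∀ x : W, conjW (conjW x) = x)
    (hk_herm : ∀ x y : W, kform bil conjW y x = starRingEnd ℂ (kform bil conjW x y))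
    (x y : W) : bil (conjW x) (conjW y) = starRingEnd ℂ (bil x y) := by
  have base : ∀ a b : W, bil a (conjW b) = starRingEnd ℂ (bil b (conjW a)) := by
    intro a b
    have h := hk_herm b a
    unfold kform at h
    rw [map_neg] at h
    exact neg_injective h
  have h2 := base (conjW x) y
  rw [hconj_invol] at h2
  rw [h2, hbil_symm y x]

theorem kform_sum_left
    (hk_herm : ∀ x y : W, kform bil conjW y x = starRingEnd ℂ (kform bil conjW x y))
    {ι : Type*} (s : Finset ι) (f : ι → W) (y : W) :
    kform bil conjW (∑ i ∈ s, f i) y = ∑ i ∈ s, kform bil conjW (f i) y :=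
  (kSesq bil conjW hk_herm).sum_left s f y

/-- "Parseval" for the bilinear pairing against a `k`-orthonormal basis. -/
theorem kform_bil_parseval (hbil_symm : ∀ x y : W, bil x y = bil y x)
    (hconj_add : ∀ x y : W, conjW (x + y) = conjW x + conjW y)
    (hconj_smul : ∀ (c : ℂ) (x : W), conjW (c • x) = (starRingEnd ℂ c) • conjW x)
    (hconj_invol : ∀ x : W, conjW (conjW x) = x)
    (hk_herm : ∀ x y : W, kform bil conjW y x = starRingEnd ℂ (kform bil conjW x y))
    {ιW : Type*} [Fintype ιW] [DecidableEq ιW]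
    (r : Module.Basis ιW ℂ W)
    (hr : ∀ i j, kform bil conjW (r i) (r j) = if i = j then 1 else 0) (x : W) :
    ∑ j, bil x (r j) * starRingEnd ℂ (bil x (r j)) = kform bil conjW x x := by
  have hcc := bil_conj_conj bil conjW hbil_symm hconj_invol hk_herm
  have hy := (kSesq bil conjW hk_herm).expand r hr (conjW x)
  have hx : x = ∑ j, starRingEnd ℂ (kform bil conjW (conjW x) (r j)) • conjW (r j) := by
    conv_lhs => rw [← hconj_invol x]
    rw [congrArg conjW hy, conjW_sum conjW hconj_add]
    exact Finset.sum_congr rfl fun j _ => hconj_smul _ _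
  have hco : ∀ j, starRingEnd ℂ (kform bil conjW (conjW x) (r j)) = -(bil x (r j)) := by
    intro j
    unfold kform
    rw [map_neg, hcc x (r j), Complex.conj_conj]
  have hk2 : ∀ j, kform bil conjW (conjW (r j)) x = starRingEnd ℂ (-(bil x (r j))) := by
    intro j
    unfold kform
    rw [show bil (conjW (r j)) (conjW x) = starRingEnd ℂ (bil (r j) x) from hcc (r j) x,
      hbil_symm (r j) x, ← map_neg]
  have main : ∀ y : W, kform bil conjW x y
      = ∑ j, (-(bil x (r j))) * kform bil conjW (conjW (r j)) y := by
    intro y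
    conv_lhs => rw [hx]
    rw [kform_sum_left bil conjW hk_herm]
    refine Finset.sum_congr rfl fun j _ => ?_
    rw [kform_smul_left, hco j]
  rw [main x]
  refine Finset.sum_congr rfl fun j _ => ?_
  rw [hk2 j, map_neg]
  ring

/-- Existence of a `k`-orthonormal basis of `W`. -/
theorem exists_kON_basis (hbil_symm : ∀ x y : W, bil x y = bil y x)
    (hconj_add : ∀ x y : W, conjW (x + y) = conjW x + conjW y)
    (hconj_smul : ∀ (c : ℂ) (x : W), conjW (c • x) = (starRingEnd ℂ c) • conjW x)
    (hconj_invol : ∀ x : W, conjW (conjW x) = x)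
    (hk_herm : ∀ x y : W, kform bil conjW y x = starRingEnd ℂ (kform bil conjW x y))
    (hk_pos : ∀ x : W, x ≠ 0 → 0 < (kform bil conjW x x).re) :
    ∃ r : Module.Basis (Fin (Module.finrank ℂ W)) ℂ W,
      ∀ i j, kform bil conjW (r i) (r j) = if i = j then 1 else 0 := by
  classical
  let core : InnerProductSpace.Core ℂ W :=
    { inner := fun x y => kform bil conjW y x
      conj_inner_symm := fun x y => (hk_herm x y).symm
      re_inner_nonneg := fun x => by
        by_cases hx : x = 0
        · subst hx
          show (0 : ℝ) ≤ (kform bil conjW (0 : W) (0 : W)).re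
          rw [kform_zero_zero bil conjW]
          simp
        · exact le_of_lt (hk_pos x hx)
      add_left := fun x y z => (kSesq bil conjW hk_herm).add_right z x y
      smul_left := fun x y c => (kSesq bil conjW hk_herm).smul_right c y x
      definite := fun x hx => by
        by_contra hne
        have h := hk_pos x hne
        have hx' : kform bil conjW x x = 0 := hx
        rw [hx'] at h
        simp at h }
  letI : NormedAddCommGroup W := core.toNormedAddCommGroup
  letI : InnerProductSpace ℂ W := InnerProductSpace.ofCore core.toCore
  let ob := stdOrthonormalBasis ℂ W
  have h := ob.orthonormal
  rw [orthonormal_iff_ite] at h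
  refine ⟨ob.toBasis, fun i j => ?_⟩
  rw [OrthonormalBasis.coe_toBasis]
  have hji := h j i
  by_cases hij : i = j
  · subst hij
    rw [if_pos rfl]
    rw [if_pos rfl] at hji
    exact hji
  · rw [if_neg hij]
    rw [if_neg (fun hh => hij hh.symm)] at hji
    exact hji

end Bases

section XiB

variable (h : HermIP V)

/-- `y ↦ h(y, x)` as a dual vector. -/
noncomputable def flipForm (x : V) : Module.Dual ℂ V where
  toFun y := h.form y x
  map_add' a b := h.add_left a b x
  map_smul' c a := by simpa using h.smul_left c a x

/-- `ξ_x := 2 h(·, x)`. -/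
noncomputable def Xi (x : V) : Module.Dual ℂ V := (2 : ℂ) • flipForm h x

theorem Xi_apply (x y : V) : Xi h x y = 2 * h.form y x := by
  simp [Xi, flipForm]

variable (wg : Module.Dual ℂ V → V)
  {ιA : Type*} [Fintype ιA] [DecidableEq ιA]

theorem Xi_inner (hwg : ∀ (ξ : Module.Dual ℂ V) (x : V), ξ x = h.form x (wg ξ))
    (v' : Module.Basis ιA ℂ V)
    (hv' : ∀ i j, h.form (v' i) (v' j) = if i = j then 1 else 0) (i j : ιA) :
    (1 / 4 : ℂ) * dualForm h wg (Xi h (v' i)) (Xi h (v' j)) = if i = j then 1 else 0 := by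
  rw [dualForm_eval h wg hwg v' hv']
  have hterm : ∀ l, Xi h (v' i) (v' l) * starRingEnd ℂ (Xi h (v' j) (v' l))
      = if l = i then (if l = j then 4 else 0) else 0 := by
    intro l
    rw [Xi_apply, Xi_apply, hv' l i, hv' l j]
    by_cases h1 : l = i
    · by_cases h2 : l = j
      · rw [if_pos h1, if_pos h2, if_pos h1, if_pos h2]
        norm_num [Complex.conj_ofNat]
      · rw [if_pos h1, if_neg h2, if_pos h1, if_neg h2]
        simp
    · rw [if_neg h1, if_neg h1]
      simp
  rw [Finset.sum_congr rfl (fun l _ => hterm l), Finset.sum_ite_eq' Finset.univ i]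
  rw [if_pos (Finset.mem_univ i)]
  by_cases hij : i = j
  · subst hij; norm_num
  · rw [if_neg hij, if_neg hij, mul_zero]

/-- The rescaled-dual orthonormal family `Xi` as a basis of the dual space. -/
noncomputable def XiBasis (hwg : ∀ (ξ : Module.Dual ℂ V) (x : V), ξ x = h.form x (wg ξ))
    (v' : Module.Basis ιA ℂ V)
    (hv' : ∀ i j, h.form (v' i) (v' j) = if i = j then 1 else 0) :
    Module.Basis ιA ℂ (Module.Dual ℂ V) := by
  have hON : ∀ i j, ((dualSesq h wg hwg).rescale (1 / 4)).form (Xi h (v' i)) (Xi h (v' j))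
      = if i = j then 1 else 0 := by
    intro i j
    show (((1 : ℝ) / 4 : ℝ) : ℂ) * dualForm h wg (Xi h (v' i)) (Xi h (v' j)) = _
    rw [show ((((1 : ℝ) / 4 : ℝ)) : ℂ) = (1 / 4 : ℂ) by norm_num]
    exact Xi_inner h wg hwg v' hv' i j
  have hli : LinearIndependent ℂ (fun i => Xi h (v' i)) :=
    Sesq.linearIndependent_of_ON _ _ hON
  have hcard : Fintype.card ιA = Module.finrank ℂ (Module.Dual ℂ V) := by
    rw [Subspace.dual_finrank_eq]
    exact (Module.finrank_eq_card_basis v').symm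
  exact Module.Basis.mk hli (hli.span_eq_top_of_card_eq_finrank' hcard).ge

theorem XiBasis_apply (hwg : ∀ (ξ : Module.Dual ℂ V) (x : V), ξ x = h.form x (wg ξ))
    (v' : Module.Basis ιA ℂ V)
    (hv' : ∀ i j, h.form (v' i) (v' j) = if i = j then 1 else 0) (i : ιA) :
    XiBasis h wg hwg v' hv' i = Xi h (v' i) := by
  unfold XiBasis
  simp [Module.Basis.coe_mk]

end XiB
section Master

variable (bil : W →ₗ[ℂ] W →ₗ[ℂ] ℂ) (conjW : W → W)

theorem kform_zero_left (y : W) : kform bil conjW 0 y = 0 := by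
  simp [kform]

theorem kform_zero_right
    (hk_herm : ∀ x y : W, kform bil conjW y x = starRingEnd ℂ (kform bil conjW x y)) (x : W) :
    kform bil conjW x 0 = 0 := (kSesq bil conjW hk_herm).zero_right x

theorem kform_neg_neg
    (hconj_smul : ∀ (c : ℂ) (x : W), conjW (c • x) = (starRingEnd ℂ c) • conjW x)
    (x y : W) : kform bil conjW (-x) (-y) = kform bil conjW x y := by
  unfold kform
  have hc : conjW (-y) = -conjW y := by
    have h := hconj_smul (-1 : ℂ) y
    simpa using h
  rw [hc]
  simp

variable (g' : HermIP V) (wg' : Module.Dual ℂ V → V)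

theorem dualForm_zero_left
    (hwg' : ∀ (ξ : Module.Dual ℂ V) (x : V), ξ x = g'.form x (wg' ξ))
    (η : Module.Dual ℂ V) : dualForm g' wg' 0 η = 0 :=
  (dualSesq g' wg' hwg').zero_left η

theorem dualForm_zero_right
    (hwg' : ∀ (ξ : Module.Dual ℂ V) (x : V), ξ x = g'.form x (wg' ξ))
    (ξ : Module.Dual ℂ V) : dualForm g' wg' ξ 0 = 0 :=
  (dualSesq g' wg' hwg').zero_right ξ

theorem dualForm_negsmul2
    (hwg' : ∀ (ξ : Module.Dual ℂ V) (x : V), ξ x = g'.form x (wg' ξ))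
    (ζ : Module.Dual ℂ V) :
    dualForm g' wg' (-((2 : ℂ) • ζ)) (-((2 : ℂ) • ζ)) = 4 * dualForm g' wg' ζ ζ := by
  show (dualSesq g' wg' hwg').form (-((2 : ℂ) • ζ)) (-((2 : ℂ) • ζ))
      = 4 * (dualSesq g' wg' hwg').form ζ ζ
  rw [(dualSesq g' wg' hwg').neg_left, (dualSesq g' wg' hwg').neg_right,
    (dualSesq g' wg' hwg').smul_left, (dualSesq g' wg' hwg').smul_right, Complex.conj_ofNat]
  ring

variable {ιA : Type*} [Fintype ιA] [DecidableEq ιA]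

/-- A `D(g')`-orthonormal basis of `E` built from `g'`-orthonormal and `k`-orthonormal data. -/
noncomputable def prodB
    (hwg' : ∀ (ξ : Module.Dual ℂ V) (x : V), ξ x = g'.form x (wg' ξ))
    (v' : Module.Basis ιA ℂ V)
    (hv' : ∀ i j, g'.form (v' i) (v' j) = if i = j then 1 else 0)
    (r : Module.Basis (Fin (Module.finrank ℂ W)) ℂ W) :
    Module.Basis (ιA ⊕ (Fin (Module.finrank ℂ W) ⊕ ιA)) ℂ (E V W) :=
  v'.prod (r.prod (XiBasis g' wg' hwg' v' hv'))

variable (hwg' : ∀ (ξ : Module.Dual ℂ V) (x : V), ξ x = g'.form x (wg' ξ))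
  (v' : Module.Basis ιA ℂ V)
  (hv' : ∀ i j, g'.form (v' i) (v' j) = if i = j then 1 else 0)
  (r : Module.Basis (Fin (Module.finrank ℂ W)) ℂ W)

theorem prodB_inl (i : ιA) :
    prodB g' wg' hwg' v' hv' r (Sum.inl i) = ((v' i, 0, 0) : E V W) := by
  unfold prodB
  exact Prod.ext (Module.Basis.prod_apply_inl_fst _ _ _) (Module.Basis.prod_apply_inl_snd _ _ _)

theorem prodB_inr_inl (j : Fin (Module.finrank ℂ W)) :
    prodB g' wg' hwg' v' hv' r (Sum.inr (Sum.inl j)) = ((0, r j, 0) : E V W) := by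
  unfold prodB
  refine Prod.ext (Module.Basis.prod_apply_inr_fst _ _ _) ?_
  rw [Module.Basis.prod_apply_inr_snd]
  exact Prod.ext (Module.Basis.prod_apply_inl_fst _ _ _) (Module.Basis.prod_apply_inl_snd _ _ _)

theorem prodB_inr_inr (i : ιA) :
    prodB g' wg' hwg' v' hv' r (Sum.inr (Sum.inr i))
      = ((0, 0, Xi g' (v' i)) : E V W) := by
  unfold prodB
  refine Prod.ext (Module.Basis.prod_apply_inr_fst _ _ _) ?_
  rw [Module.Basis.prod_apply_inr_snd]
  refine Prod.ext (Module.Basis.prod_apply_inr_fst _ _ _) ?_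
  rw [Module.Basis.prod_apply_inr_snd]
  exact XiBasis_apply g' wg' hwg' v' hv' i

theorem prodB_ON
    (hk_herm : ∀ x y : W, kform bil conjW y x = starRingEnd ℂ (kform bil conjW x y))
    (hr : ∀ i j, kform bil conjW (r i) (r j) = if i = j then 1 else 0) :
    ∀ c c', Dform bil conjW g' wg' (prodB g' wg' hwg' v' hv' r c)
      (prodB g' wg' hwg' v' hv' r c') = if c = c' then 1 else 0 := by
  intro c c'
  rcases c with i | j | i <;> rcases c' with i' | j' | i'
  · rw [prodB_inl, prodB_inl]
    show g'.form (v' i) (v' i') + kform bil conjW 0 0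
        + (1 / 4 : ℂ) * dualForm g' wg' 0 0 = _
    rw [hv' i i', kform_zero_zero, dualForm_zero_left g' wg' hwg', mul_zero, add_zero, add_zero]
    simp
  · rw [prodB_inl, prodB_inr_inl]
    show g'.form (v' i) 0 + kform bil conjW 0 (r j')
        + (1 / 4 : ℂ) * dualForm g' wg' 0 0 = _
    rw [g'.zero_right, kform_zero_left, dualForm_zero_left g' wg' hwg', mul_zero]
    simp
  · rw [prodB_inl, prodB_inr_inr]
    show g'.form (v' i) 0 + kform bil conjW 0 0
        + (1 / 4 : ℂ) * dualForm g' wg' 0 (Xi g' (v' i')) = _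
    rw [g'.zero_right, kform_zero_zero, dualForm_zero_left g' wg' hwg', mul_zero]
    simp
  · rw [prodB_inr_inl, prodB_inl]
    show g'.form 0 (v' i') + kform bil conjW (r j) 0
        + (1 / 4 : ℂ) * dualForm g' wg' 0 0 = _
    rw [g'.zero_left, kform_zero_right bil conjW hk_herm, dualForm_zero_left g' wg' hwg',
      mul_zero]
    simp
  · rw [prodB_inr_inl, prodB_inr_inl]
    show g'.form 0 0 + kform bil conjW (r j) (r j')
        + (1 / 4 : ℂ) * dualForm g' wg' 0 0 = _
    rw [g'.zero_left, hr j j', dualForm_zero_left g' wg' hwg', mul_zero, add_zero, zero_add]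
    simp
  · rw [prodB_inr_inl, prodB_inr_inr]
    show g'.form 0 0 + kform bil conjW (r j) 0
        + (1 / 4 : ℂ) * dualForm g' wg' 0 (Xi g' (v' i')) = _
    rw [g'.zero_left, kform_zero_right bil conjW hk_herm, dualForm_zero_left g' wg' hwg',
      mul_zero]
    simp
  · rw [prodB_inr_inr, prodB_inl]
    show g'.form 0 (v' i') + kform bil conjW 0 0
        + (1 / 4 : ℂ) * dualForm g' wg' (Xi g' (v' i)) 0 = _
    rw [g'.zero_left, kform_zero_zero, dualForm_zero_right g' wg' hwg', mul_zero]
    simp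
  · rw [prodB_inr_inr, prodB_inr_inl]
    show g'.form 0 0 + kform bil conjW 0 (r j')
        + (1 / 4 : ℂ) * dualForm g' wg' (Xi g' (v' i)) 0 = _
    rw [g'.zero_left, kform_zero_left, dualForm_zero_right g' wg' hwg', mul_zero]
    simp
  · rw [prodB_inr_inr, prodB_inr_inr]
    show g'.form 0 0 + kform bil conjW 0 0
        + (1 / 4 : ℂ) * dualForm g' wg' (Xi g' (v' i)) (Xi g' (v' i')) = _
    rw [g'.zero_left, kform_zero_zero, Xi_inner g' wg' hwg' v' hv' i i']
    simp

end Master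

section MasterSum

variable (bil : W →ₗ[ℂ] W →ₗ[ℂ] ℂ) (conjW : W → W)

theorem master_sum
    (hbil_symm : ∀ x y : W, bil x y = bil y x)
    (hconj_add : ∀ x y : W, conjW (x + y) = conjW x + conjW y)
    (hconj_smul : ∀ (c : ℂ) (x : W), conjW (c • x) = (starRingEnd ℂ c) • conjW x)
    (hconj_invol : ∀ x : W, conjW (conjW x) = x)
    (hk_herm : ∀ x y : W, kform bil conjW y x = starRingEnd ℂ (kform bil conjW x y))
    {ιA ιB : Type*} [Fintype ιA] [Fintype ιB] [DecidableEq ιA] [DecidableEq ιB]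
    (α' : V →ₗ[ℂ] W) (β' : V →ₗ[ℂ] Module.Dual ℂ V)
    (g' g'' : HermIP V) (wg' wg'' : Module.Dual ℂ V → V)
    (hwg' : ∀ (ξ : Module.Dual ℂ V) (x : V), ξ x = g'.form x (wg' ξ))
    (hwg'' : ∀ (ξ : Module.Dual ℂ V) (x : V), ξ x = g''.form x (wg'' ξ))
    (v' : Module.Basis ιA ℂ V)
    (hv' : ∀ i j, g'.form (v' i) (v' j) = if i = j then 1 else 0)
    (v'' : Module.Basis ιB ℂ V)
    (hv'' : ∀ i j, g''.form (v'' i) (v'' j) = if i = j then 1 else 0)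
    (r : Module.Basis (Fin (Module.finrank ℂ W)) ℂ W)
    (hr : ∀ i j, kform bil conjW (r i) (r j) = if i = j then 1 else 0) :
    ∑ c : ιA ⊕ (Fin (Module.finrank ℂ W) ⊕ ιA),
        Dform bil conjW g'' wg'' (Psi bil α' β' (prodB g' wg' hwg' v' hv' r c))
          (Psi bil α' β' (prodB g' wg' hwg' v' hv' r c))
      = (∑ i, g''.form (v' i) (v' i)) + (∑ i, g'.form (v'' i) (v'' i))
        + (∑ i, kform bil conjW (α' (v' i)) (α' (v' i)))
        + (∑ i, kform bil conjW (α' (v'' i)) (α' (v'' i)))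
        + (1 / 4 : ℂ) * (∑ i, dualForm g'' wg''
            (Bmap bil α' β' (v' i)) (Bmap bil α' β' (v' i)))
        + (Module.finrank ℂ W : ℂ) := by
  classical
  rw [Fintype.sum_sum_type, Fintype.sum_sum_type]
  set ζ : Fin (Module.finrank ℂ W) → Module.Dual ℂ V :=
    fun j => ((bil.flip (r j)).comp α') with hζdef
  -- block 1
  have e1 : ∑ i, Dform bil conjW g'' wg''
        (Psi bil α' β' (prodB g' wg' hwg' v' hv' r (Sum.inl i)))
        (Psi bil α' β' (prodB g' wg' hwg' v' hv' r (Sum.inl i)))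
      = (∑ i, g''.form (v' i) (v' i))
        + (∑ i, kform bil conjW (α' (v' i)) (α' (v' i)))
        + (1 / 4 : ℂ) * (∑ i, dualForm g'' wg''
            (Bmap bil α' β' (v' i)) (Bmap bil α' β' (v' i))) := by
    have h : ∀ i, Dform bil conjW g'' wg''
          (Psi bil α' β' (prodB g' wg' hwg' v' hv' r (Sum.inl i)))
          (Psi bil α' β' (prodB g' wg' hwg' v' hv' r (Sum.inl i)))
        = g''.form (v' i) (v' i) + kform bil conjW (α' (v' i)) (α' (v' i))
          + (1 / 4 : ℂ) * dualForm g'' wg''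
              (Bmap bil α' β' (v' i)) (Bmap bil α' β' (v' i)) := by
      intro i
      rw [prodB_inl, Psi_apply_V]
      rfl
    rw [Finset.sum_congr rfl (fun i _ => h i), Finset.sum_add_distrib, Finset.sum_add_distrib,
      ← Finset.mul_sum]
  -- block 2
  have e2 : ∑ j, Dform bil conjW g'' wg''
        (Psi bil α' β' (prodB g' wg' hwg' v' hv' r (Sum.inr (Sum.inl j))))
        (Psi bil α' β' (prodB g' wg' hwg' v' hv' r (Sum.inr (Sum.inl j))))
      = (Module.finrank ℂ W : ℂ) + (∑ i, kform bil conjW (α' (v'' i)) (α' (v'' i))) := by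
    have h : ∀ j, Dform bil conjW g'' wg''
          (Psi bil α' β' (prodB g' wg' hwg' v' hv' r (Sum.inr (Sum.inl j))))
          (Psi bil α' β' (prodB g' wg' hwg' v' hv' r (Sum.inr (Sum.inl j))))
        = 1 + dualForm g'' wg'' (ζ j) (ζ j) := by
      intro j
      rw [prodB_inr_inl, Psi_apply_W]
      show g''.form 0 0 + kform bil conjW (r j) (r j)
          + (1 / 4 : ℂ) * dualForm g'' wg'' (-((2 : ℂ) • ζ j)) (-((2 : ℂ) • ζ j)) = _
      rw [g''.zero_left, hr j j, if_pos rfl, dualForm_negsmul2 g'' wg'' hwg'']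
      ring
    have idA : ∑ j, dualForm g'' wg'' (ζ j) (ζ j)
        = ∑ i, kform bil conjW (α' (v'' i)) (α' (v'' i)) := by
      have h1 : ∀ j, dualForm g'' wg'' (ζ j) (ζ j)
          = ∑ i, bil (α' (v'' i)) (r j) * starRingEnd ℂ (bil (α' (v'' i)) (r j)) := by
        intro j
        rw [dualForm_eval g'' wg'' hwg'' v'' hv'']
        exact Finset.sum_congr rfl fun i _ => rfl
      rw [Finset.sum_congr rfl (fun j _ => h1 j), Finset.sum_comm]
      exact Finset.sum_congr rfl fun i _ =>
        kform_bil_parseval bil conjW hbil_symm hconj_add hconj_smul hconj_invol hk_herm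
          r hr (α' (v'' i))
    rw [Finset.sum_congr rfl (fun j _ => h j), Finset.sum_add_distrib, idA]
    congr 1
    rw [Finset.sum_const, Finset.card_univ, Fintype.card_fin]
    simp
  -- block 3
  have e3 : ∑ i, Dform bil conjW g'' wg''
        (Psi bil α' β' (prodB g' wg' hwg' v' hv' r (Sum.inr (Sum.inr i))))
        (Psi bil α' β' (prodB g' wg' hwg' v' hv' r (Sum.inr (Sum.inr i))))
      = ∑ l, g'.form (v'' l) (v'' l) := by
    have h : ∀ i, Dform bil conjW g'' wg''
          (Psi bil α' β' (prodB g' wg' hwg' v' hv' r (Sum.inr (Sum.inr i))))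
          (Psi bil α' β' (prodB g' wg' hwg' v' hv' r (Sum.inr (Sum.inr i))))
        = ∑ l, g'.form (v'' l) (v' i) * starRingEnd ℂ (g'.form (v'' l) (v' i)) := by
      intro i
      rw [prodB_inr_inr, Psi_apply_X]
      show g''.form 0 0 + kform bil conjW 0 0
          + (1 / 4 : ℂ) * dualForm g'' wg'' (Xi g' (v' i)) (Xi g' (v' i)) = _
      rw [g''.zero_left, kform_zero_zero, dualForm_eval g'' wg'' hwg'' v'' hv'']
      have hpt : ∀ l, Xi g' (v' i) (v'' l) * starRingEnd ℂ (Xi g' (v' i) (v'' l))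
          = 4 * (g'.form (v'' l) (v' i) * starRingEnd ℂ (g'.form (v'' l) (v' i))) := by
        intro l
        rw [Xi_apply, map_mul, Complex.conj_ofNat]
        ring
      rw [Finset.sum_congr rfl (fun l _ => hpt l), ← Finset.mul_sum]
      ring
    rw [Finset.sum_congr rfl (fun i _ => h i), Finset.sum_comm]
    refine Finset.sum_congr rfl fun l _ => ?_
    exact (g'.parseval v' hv' (v'' l)).symm
  rw [e1, e2, e3]
  ring

/-- Transpose identity for the `B`-norm term. -/
theorem Btranspose
    (hbil_symm : ∀ x y : W, bil x y = bil y x)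
    {ιA ιB : Type*} [Fintype ιA] [Fintype ιB] [DecidableEq ιA] [DecidableEq ιB]
    (α : V →ₗ[ℂ] W) (β : V →ₗ[ℂ] Module.Dual ℂ V)
    (hβ : ∀ U U' : V, β U U' = -(β U' U))
    (g' g'' : HermIP V) (wg' wg'' : Module.Dual ℂ V → V)
    (hwg' : ∀ (ξ : Module.Dual ℂ V) (x : V), ξ x = g'.form x (wg' ξ))
    (hwg'' : ∀ (ξ : Module.Dual ℂ V) (x : V), ξ x = g''.form x (wg'' ξ))
    (v' : Module.Basis ιA ℂ V)
    (hv' : ∀ i j, g'.form (v' i) (v' j) = if i = j then 1 else 0)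
    (v'' : Module.Basis ιB ℂ V)
    (hv'' : ∀ i j, g''.form (v'' i) (v'' j) = if i = j then 1 else 0) :
    ∑ i, dualForm g' wg' (Bmap bil (-α) (-β) (v'' i)) (Bmap bil (-α) (-β) (v'' i))
      = ∑ i, dualForm g'' wg'' (Bmap bil α β (v' i)) (Bmap bil α β (v' i)) := by
  have key : ∀ x y : V, Bmap bil (-α) (-β) x y = Bmap bil α β y x := by
    intro x y
    unfold Bmap
    simp only [LinearMap.sub_apply, LinearMap.neg_apply, LinearMap.comp_apply, map_neg]
    rw [hβ y x, hbil_symm (α y) (α x)]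
    ring
  calc ∑ i, dualForm g' wg' (Bmap bil (-α) (-β) (v'' i)) (Bmap bil (-α) (-β) (v'' i))
      = ∑ i, ∑ l, Bmap bil α β (v' l) (v'' i)
          * starRingEnd ℂ (Bmap bil α β (v' l) (v'' i)) := by
        refine Finset.sum_congr rfl fun i _ => ?_
        rw [dualForm_eval g' wg' hwg' v' hv']
        refine Finset.sum_congr rfl fun l _ => ?_
        rw [key]
    _ = ∑ i, dualForm g'' wg'' (Bmap bil α β (v' i)) (Bmap bil α β (v' i)) := by
        rw [Finset.sum_comm]
        refine Finset.sum_congr rfl fun l _ => ?_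
        exact (dualForm_eval g'' wg'' hwg'' v'' hv'' _ _).symm

end MasterSum

set_option maxHeartbeats 2000000 in
theorem statement10 (n m : ℕ)
    (hn : Module.finrank ℂ V = n) (hm : Module.finrank ℂ W = m)
    -- the ℂ-bilinear extension `⟨·,·⟩` of the negative-definite pairing, and conjugation
    (bil : W →ₗ[ℂ] W →ₗ[ℂ] ℂ) (hbil_symm : ∀ x y : W, bil x y = bil y x)
    (conjW : W → W)
    (hconj_add : ∀ x y : W, conjW (x + y) = conjW x + conjW y)
    (hconj_smul : ∀ (c : ℂ) (x : W), conjW (c • x) = (starRingEnd ℂ c) • conjW x)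
    (hconj_invol : ∀ x : W, conjW (conjW x) = x)
    -- `k(x,y) = −⟨x, ȳ⟩` is a positive-definite Hermitian inner product on `W`
    (hk_herm : ∀ x y : W, kform bil conjW y x = starRingEnd ℂ (kform bil conjW x y))
    (hk_pos : ∀ x : W, x ≠ 0 → 0 < (kform bil conjW x x).re)
    -- the Hermitian inner products `g`, `g̃` on `V` and their Riesz maps
    (g gt : HermIP V)
    (wg wgt : Module.Dual ℂ V → V)
    (hwg : ∀ (ξ : Module.Dual ℂ V) (x : V), ξ x = g.form x (wg ξ))
    (hwgt : ∀ (ξ : Module.Dual ℂ V) (x : V), ξ x = gt.form x (wgt ξ))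
    -- the data `α`, `β`
    (α : V →ₗ[ℂ] W)
    (β : V →ₗ[ℂ] Module.Dual ℂ V) (hβ : ∀ U U' : V, β U U' = -(β U' U))
    -- `𝐆` is defined by `𝐆(Ψq, Ψq') := D(g)(q,q')`, and `𝐆̃ := D(g̃)`
    (G : E V W → E V W → ℂ)
    (hG : ∀ q q' : E V W, G (Psi bil α β q) (Psi bil α β q') = Dform bil conjW g wg q q')
    -- orthonormal bases computing the traces
    (ιE ιE' ιV ιV' : Type) [Fintype ιE] [Fintype ιE'] [Fintype ιV] [Fintype ιV']
    [DecidableEq ιE] [DecidableEq ιE'] [DecidableEq ιV] [DecidableEq ιV']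
    (eG : Module.Basis ιE ℂ (E V W))
    (heG : ∀ a b, G (eG a) (eG b) = if a = b then 1 else 0)
    (eGt : Module.Basis ιE' ℂ (E V W))
    (heGt : ∀ a b, Dform bil conjW gt wgt (eGt a) (eGt b) = if a = b then 1 else 0)
    (v : Module.Basis ιV ℂ V) (hv : ∀ i j, g.form (v i) (v j) = if i = j then 1 else 0)
    (vt : Module.Basis ιV' ℂ V) (hvt : ∀ i j, gt.form (vt i) (vt j) = if i = j then 1 else 0) :
    -- `tr_𝐆 𝐆̃ = tr_𝐆̃ 𝐆`
    (∑ a, Dform bil conjW gt wgt (eG a) (eG a) = ∑ a, G (eGt a) (eGt a)) ∧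
    -- the trace identity
    (∑ a, Dform bil conjW gt wgt (eG a) (eG a) =
      (∑ i, gt.form (v i) (v i)) + (∑ i, g.form (vt i) (vt i))
        + (∑ i, kform bil conjW (α (v i)) (α (v i)))
        + (∑ i, kform bil conjW (α (vt i)) (α (vt i)))
        + (1 / 4 : ℂ) * (∑ i, dualForm gt wgt (Bmap bil α β (v i)) (Bmap bil α β (v i)))
        + (m : ℂ)) ∧
    -- lower bound and equality case
    (2 * (n : ℝ) + (m : ℝ) ≤ (∑ a, Dform bil conjW gt wgt (eG a) (eG a)).re ∧
      ((∑ a, Dform bil conjW gt wgt (eG a) (eG a)).re = 2 * (n : ℝ) + (m : ℝ) ↔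
        g.form = gt.form ∧ α = 0 ∧ β = 0)) := by
  classical
  obtain ⟨r, hr⟩ := exists_kON_basis bil conjW hbil_symm hconj_add hconj_smul hconj_invol
    hk_herm hk_pos
  have hPsiR : ∀ x : E V W, Psi bil α β (Psi bil (-α) (-β) x) = x := by
    intro x
    have h := Psi_inv bil (-α) (-β) hbil_symm x
    simpa using h
  have hGinv : ∀ x y : E V W, G x y
      = Dform bil conjW g wg (Psi bil (-α) (-β) x) (Psi bil (-α) (-β) y) := by
    intro x y
    rw [← hG (Psi bil (-α) (-β) x) (Psi bil (-α) (-β) y), hPsiR x, hPsiR y]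
  -- `G` as a sesquilinear form
  let SG : Sesq (E V W) :=
    { form := G
      add_left := fun x y z => by
        rw [hGinv (x + y) z, hGinv x z, hGinv y z, Psi_add bil (-α) (-β) x y]
        exact (DSesq bil conjW hk_herm g wg hwg).add_left _ _ _
      smul_left := fun c x y => by
        rw [hGinv (c • x) y, hGinv x y, Psi_smul bil (-α) (-β) c x]
        exact (DSesq bil conjW hk_herm g wg hwg).smul_left _ _ _
      conj_symm := fun x y => by
        rw [hGinv y x, hGinv x y]
        exact (DSesq bil conjW hk_herm g wg hwg).conj_symm _ _ }
  -- the concrete bases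
  set bg := prodB g wg hwg v hv r with hbgdef
  set bgt := prodB gt wgt hwgt vt hvt r with hbgtdef
  set fG := bg.map (PsiEquiv bil α β hbil_symm) with hfGdef
  have hfG_apply : ∀ c, fG c = Psi bil α β (bg c) := by
    intro c
    rw [hfGdef, Module.Basis.map_apply]
    rfl
  have hfG_ON : ∀ c c', SG.form (fG c) (fG c') = if c = c' then 1 else 0 := by
    intro c c'
    show G (fG c) (fG c') = _
    rw [hfG_apply, hfG_apply, hG]
    exact prodB_ON bil conjW g wg hwg v hv r hk_herm hr c c'
  -- part 2 : trace identity
  have hT1 : ∑ a, Dform bil conjW gt wgt (eG a) (eG a)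
      = ∑ c, Dform bil conjW gt wgt (fG c) (fG c) :=
    Sesq.trace_indep SG (DSesq bil conjW hk_herm gt wgt hwgt) eG fG heG hfG_ON
  have hT1b : ∑ c, Dform bil conjW gt wgt (fG c) (fG c)
      = (∑ i, gt.form (v i) (v i)) + (∑ i, g.form (vt i) (vt i))
        + (∑ i, kform bil conjW (α (v i)) (α (v i)))
        + (∑ i, kform bil conjW (α (vt i)) (α (vt i)))
        + (1 / 4 : ℂ) * (∑ i, dualForm gt wgt (Bmap bil α β (v i)) (Bmap bil α β (v i)))
        + (Module.finrank ℂ W : ℂ) := by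
    rw [Finset.sum_congr rfl (fun c _ => by rw [hfG_apply c])]
    exact master_sum bil conjW hbil_symm hconj_add hconj_smul hconj_invol hk_herm α β
      g gt wg wgt hwg hwgt v hv vt hvt r hr
  have hPart2 : ∑ a, Dform bil conjW gt wgt (eG a) (eG a)
      = (∑ i, gt.form (v i) (v i)) + (∑ i, g.form (vt i) (vt i))
        + (∑ i, kform bil conjW (α (v i)) (α (v i)))
        + (∑ i, kform bil conjW (α (vt i)) (α (vt i)))
        + (1 / 4 : ℂ) * (∑ i, dualForm gt wgt (Bmap bil α β (v i)) (Bmap bil α β (v i)))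
        + (m : ℂ) := by
    rw [hT1, hT1b, hm]
  -- part 1 : symmetry of the trace
  have hT2 : ∑ a, G (eGt a) (eGt a) = ∑ c, G (bgt c) (bgt c) :=
    Sesq.trace_indep (DSesq bil conjW hk_herm gt wgt hwgt) SG eGt bgt heGt
      (prodB_ON bil conjW gt wgt hwgt vt hvt r hk_herm hr)
  have hT2b : ∑ c, G (bgt c) (bgt c)
      = (∑ i, g.form (vt i) (vt i)) + (∑ i, gt.form (v i) (v i))
        + (∑ i, kform bil conjW ((-α) (vt i)) ((-α) (vt i)))
        + (∑ i, kform bil conjW ((-α) (v i)) ((-α) (v i)))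
        + (1 / 4 : ℂ) * (∑ i, dualForm g wg
            (Bmap bil (-α) (-β) (vt i)) (Bmap bil (-α) (-β) (vt i)))
        + (Module.finrank ℂ W : ℂ) := by
    rw [Finset.sum_congr rfl (fun c _ => hGinv (bgt c) (bgt c))]
    exact master_sum bil conjW hbil_symm hconj_add hconj_smul hconj_invol hk_herm (-α) (-β)
      gt g wgt wg hwgt hwg vt hvt v hv r hr
  have hka : ∀ x : V, kform bil conjW ((-α) x) ((-α) x) = kform bil conjW (α x) (α x) := by
    intro x
    rw [LinearMap.neg_apply]
    exact kform_neg_neg bil conjW hconj_smul (α x) (α x)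
  have hBt : ∑ i, dualForm g wg (Bmap bil (-α) (-β) (vt i)) (Bmap bil (-α) (-β) (vt i))
      = ∑ i, dualForm gt wgt (Bmap bil α β (v i)) (Bmap bil α β (v i)) :=
    Btranspose bil hbil_symm α β hβ g gt wg wgt hwg hwgt v hv vt hvt
  have hPart1 : ∑ a, Dform bil conjW gt wgt (eG a) (eG a) = ∑ a, G (eGt a) (eGt a) := by
    rw [hT2, hT2b, Finset.sum_congr rfl (fun i _ => hka (vt i)),
      Finset.sum_congr rfl (fun i _ => hka (v i)), hBt, hT1, hT1b]
    ring
  -- part 3 : lower bound and equality case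
  have hcardV : Fintype.card ιV = n := by
    rw [← hn, Module.finrank_eq_card_basis v]
  set a2 : ιV → ιV' → ℂ := fun i l => gt.form (v i) (vt l) with ha2def
  set b2 : ιV' → ιV → ℂ := fun l i => g.form (vt l) (v i) with hb2def
  set P1 : ℝ := ∑ i, ∑ l, Complex.normSq (a2 i l - starRingEnd ℂ (b2 l i)) with hP1def
  set P2 : ℝ := ∑ i, (kform bil conjW (α (v i)) (α (v i))).re with hP2def
  set P3 : ℝ := ∑ i, (kform bil conjW (α (vt i)) (α (vt i))).re with hP3def
  set P4 : ℝ := ∑ i, ∑ l, Complex.normSq ((Bmap bil α β (v i)) (vt l)) with hP4def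
  have knonneg : ∀ x : W, 0 ≤ (kform bil conjW x x).re := by
    intro x
    by_cases hx : x = 0
    · subst hx
      rw [kform_zero_zero]
      norm_num
    · exact le_of_lt (hk_pos x hx)
  have hA1 : (∑ i, gt.form (v i) (v i)).re = ∑ i, ∑ l, Complex.normSq (a2 i l) := by
    rw [Complex.re_sum]
    refine Finset.sum_congr rfl fun i _ => ?_
    rw [gt.parseval vt hvt (v i), Complex.re_sum]
    refine Finset.sum_congr rfl fun l _ => ?_
    rw [Complex.mul_conj]
    exact Complex.ofReal_re _
  have hA2 : (∑ l, g.form (vt l) (vt l)).re = ∑ l, ∑ i, Complex.normSq (b2 l i) := by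
    rw [Complex.re_sum]
    refine Finset.sum_congr rfl fun l _ => ?_
    rw [g.parseval v hv (vt l), Complex.re_sum]
    refine Finset.sum_congr rfl fun i _ => ?_
    rw [Complex.mul_conj]
    exact Complex.ofReal_re _
  have hA3 : ∑ i, ∑ l, (a2 i l * b2 l i).re = (n : ℝ) := by
    have hcx : ∑ i, g.form (v i) (v i) = ∑ i, ∑ l, starRingEnd ℂ (a2 i l * b2 l i) := by
      refine Finset.sum_congr rfl fun i _ => ?_
      have hx : (v i : V) = ∑ l, a2 i l • vt l := gt.expand vt hvt (v i)
      calc g.form (v i) (v i) = g.form (v i) (∑ l, a2 i l • vt l) := congrArg (g.form (v i)) hx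
        _ = ∑ l, starRingEnd ℂ (a2 i l) * g.form (v i) (vt l) := by
            rw [g.sum_right]
            exact Finset.sum_congr rfl fun l _ => g.smul_right _ _ _
        _ = ∑ l, starRingEnd ℂ (a2 i l * b2 l i) := by
            refine Finset.sum_congr rfl fun l _ => ?_
            rw [map_mul, g.conj_symm (vt l) (v i)]
    have hdiag : ∑ i, g.form (v i) (v i) = (n : ℂ) := by
      have h1 : ∀ i : ιV, g.form (v i) (v i) = 1 := fun i => by simp [hv]
      rw [Finset.sum_congr rfl (fun i _ => h1 i), Finset.sum_const, Finset.card_univ, hcardV]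
      simp
    have h := congrArg Complex.re (hcx.symm.trans hdiag)
    rw [Complex.re_sum] at h
    simp only [Complex.re_sum, Complex.conj_re, Complex.natCast_re] at h
    exact h
  have hP1eq : P1 = (∑ i, ∑ l, Complex.normSq (a2 i l))
      + (∑ i, ∑ l, Complex.normSq (b2 l i)) - 2 * (n : ℝ) := by
    rw [hP1def]
    have hpt : ∀ (i : ιV) (l : ιV'), Complex.normSq (a2 i l - starRingEnd ℂ (b2 l i))
        = Complex.normSq (a2 i l) + Complex.normSq (b2 l i) - 2 * ((a2 i l * b2 l i).re) := by
      intro i l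
      rw [Complex.normSq_sub, Complex.normSq_conj, Complex.conj_conj]
    calc ∑ i, ∑ l, Complex.normSq (a2 i l - starRingEnd ℂ (b2 l i))
        = ∑ i, ∑ l, (Complex.normSq (a2 i l) + Complex.normSq (b2 l i)
            - 2 * ((a2 i l * b2 l i).re)) := by
          exact Finset.sum_congr rfl fun i _ => Finset.sum_congr rfl fun l _ => hpt i l
      _ = (∑ i, ∑ l, Complex.normSq (a2 i l)) + (∑ i, ∑ l, Complex.normSq (b2 l i))
            - 2 * (∑ i, ∑ l, (a2 i l * b2 l i).re) := by
          simp only [Finset.sum_sub_distrib, Finset.sum_add_distrib, Finset.mul_sum]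
      _ = _ := by rw [hA3]
  have h12 : (∑ i, gt.form (v i) (v i)).re + (∑ l, g.form (vt l) (vt l)).re
      = 2 * (n : ℝ) + P1 := by
    have hswap : ∑ l, ∑ i, Complex.normSq (b2 l i) = ∑ i, ∑ l, Complex.normSq (b2 l i) :=
      Finset.sum_comm
    rw [hA1, hA2, hswap, hP1eq]
    ring
  have hdre : ∀ i, (dualForm gt wgt (Bmap bil α β (v i)) (Bmap bil α β (v i))).re
      = ∑ l, Complex.normSq ((Bmap bil α β (v i)) (vt l)) := by
    intro i
    rw [dualForm_eval gt wgt hwgt vt hvt, Complex.re_sum]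
    refine Finset.sum_congr rfl fun l _ => ?_
    rw [Complex.mul_conj]
    exact Complex.ofReal_re _
  have hP4eq : (∑ i, dualForm gt wgt (Bmap bil α β (v i)) (Bmap bil α β (v i))).re = P4 := by
    rw [Complex.re_sum, hP4def]
    exact Finset.sum_congr rfl fun i _ => hdre i
  have hP2eq : (∑ i, kform bil conjW (α (v i)) (α (v i))).re = P2 := by
    rw [Complex.re_sum, hP2def]
  have hP3eq : (∑ i, kform bil conjW (α (vt i)) (α (vt i))).re = P3 := by
    rw [Complex.re_sum, hP3def]
  have hFre : (∑ a, Dform bil conjW gt wgt (eG a) (eG a)).re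
      = 2 * (n : ℝ) + (m : ℝ) + (P1 + P2 + P3 + (1 / 4 : ℝ) * P4) := by
    rw [hPart2]
    simp only [Complex.add_re]
    have h14 : ((1 / 4 : ℂ) * (∑ i, dualForm gt wgt
          (Bmap bil α β (v i)) (Bmap bil α β (v i)))).re
        = (1 / 4 : ℝ) * (∑ i, dualForm gt wgt
          (Bmap bil α β (v i)) (Bmap bil α β (v i))).re := by
      rw [show (1 / 4 : ℂ) = (((1 / 4 : ℝ)) : ℂ) by norm_num, Complex.re_ofReal_mul]
    rw [h14, Complex.natCast_re, hP4eq, hP2eq, hP3eq]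
    linarith [h12]
  have hP1nn : 0 ≤ P1 := by
    rw [hP1def]
    exact Finset.sum_nonneg fun i _ => Finset.sum_nonneg fun l _ => Complex.normSq_nonneg _
  have hP2nn : 0 ≤ P2 := by
    rw [hP2def]
    exact Finset.sum_nonneg fun i _ => knonneg _
  have hP3nn : 0 ≤ P3 := by
    rw [hP3def]
    exact Finset.sum_nonneg fun i _ => knonneg _
  have hP4nn : 0 ≤ P4 := by
    rw [hP4def]
    exact Finset.sum_nonneg fun i _ => Finset.sum_nonneg fun l _ => Complex.normSq_nonneg _
  refine ⟨hPart1, hPart2, ?_, ?_⟩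
  · rw [hFre]
    linarith
  · constructor
    · intro hEq
      rw [hFre] at hEq
      have hzero : P1 + P2 + P3 + (1 / 4 : ℝ) * P4 = 0 := by linarith
      have hP10 : P1 = 0 := by linarith
      have hP20 : P2 = 0 := by linarith
      have hP30 : P3 = 0 := by linarith
      have hP40 : P4 = 0 := by linarith
      -- α = 0
      have hαv : ∀ i, α (v i) = 0 := by
        intro i
        have hterm : (kform bil conjW (α (v i)) (α (v i))).re = 0 := by
          have h := (Finset.sum_eq_zero_iff_of_nonneg
            (fun i (_ : i ∈ Finset.univ) => knonneg (α (v i)))).mp (by rw [← hP2def]; exact hP20)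
          exact h i (Finset.mem_univ i)
        by_contra hne
        have := hk_pos (α (v i)) hne
        rw [hterm] at this
        exact lt_irrefl 0 this
      have hα0 : α = 0 := by
        apply Module.Basis.ext v
        intro i
        rw [hαv i]
        simp
      -- B = 0 hence β = 0
      have hBv : ∀ i, Bmap bil α β (v i) = 0 := by
        intro i
        have hrow : (∑ l, Complex.normSq ((Bmap bil α β (v i)) (vt l))) = 0 := by
          have h := (Finset.sum_eq_zero_iff_of_nonneg
            (fun i (_ : i ∈ Finset.univ) =>
              Finset.sum_nonneg fun l _ => Complex.normSq_nonneg
                ((Bmap bil α β (v i)) (vt l)))).mp (by rw [← hP4def]; exact hP40)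
          exact h i (Finset.mem_univ i)
        have hent : ∀ l, (Bmap bil α β (v i)) (vt l) = 0 := by
          intro l
          have h := (Finset.sum_eq_zero_iff_of_nonneg
            (fun l (_ : l ∈ Finset.univ) => Complex.normSq_nonneg
              ((Bmap bil α β (v i)) (vt l)))).mp hrow
          exact Complex.normSq_eq_zero.mp (h l (Finset.mem_univ l))
        apply Module.Basis.ext vt
        intro l
        rw [hent l]
        simp
      have hβ0 : β = 0 := by
        apply Module.Basis.ext v
        intro i
        have h := hBv i
        unfold Bmap at h
        rw [hα0] at h
        simp only [LinearMap.zero_apply, map_zero, LinearMap.zero_comp, sub_zero] at h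
        rw [h]
        simp
      -- g = gt
      have hgl : ∀ (i : ιV) (l : ιV'), g.form (v i) (vt l) = gt.form (v i) (vt l) := by
        intro i l
        have hab : a2 i l - starRingEnd ℂ (b2 l i) = 0 := by
          have h1 := (Finset.sum_eq_zero_iff_of_nonneg
            (fun i (_ : i ∈ Finset.univ) =>
              Finset.sum_nonneg fun l _ => Complex.normSq_nonneg
                (a2 i l - starRingEnd ℂ (b2 l i)))).mp (by rw [← hP1def]; exact hP10)
          have h2 := (Finset.sum_eq_zero_iff_of_nonneg
            (fun l (_ : l ∈ Finset.univ) => Complex.normSq_nonneg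
              (a2 i l - starRingEnd ℂ (b2 l i)))).mp (h1 i (Finset.mem_univ i))
          exact Complex.normSq_eq_zero.mp (h2 l (Finset.mem_univ l))
        have hab' : gt.form (v i) (vt l) = starRingEnd ℂ (g.form (vt l) (v i)) :=
          sub_eq_zero.mp hab
        rw [hab']
        exact g.conj_symm (vt l) (v i)
      have hforms : g.form = gt.form := by
        funext x y
        have hexp : ∀ h1 : HermIP V, h1.form x y
            = ∑ i, ∑ l, (v.repr x i) * (starRingEnd ℂ (vt.repr y l) * h1.form (v i) (vt l)) := by
          intro h1
          conv_lhs => rw [← Module.Basis.sum_repr v x]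
          rw [h1.sum_left]
          refine Finset.sum_congr rfl fun i _ => ?_
          rw [h1.smul_left]
          have hy : h1.form (v i) y
              = ∑ l, starRingEnd ℂ (vt.repr y l) * h1.form (v i) (vt l) := by
            conv_lhs => rw [← Module.Basis.sum_repr vt y]
            rw [h1.sum_right]
            exact Finset.sum_congr rfl fun l _ => h1.smul_right _ _ _
          rw [hy, Finset.mul_sum]
        rw [hexp g, hexp gt]
        refine Finset.sum_congr rfl fun i _ => Finset.sum_congr rfl fun l _ => ?_
        rw [hgl i l]
      exact ⟨hforms, hα0, hβ0⟩
    · rintro ⟨hforms, hα0, hβ0⟩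
      rw [hFre]
      have hP20 : P2 = 0 := by
        rw [hP2def]
        apply Finset.sum_eq_zero
        intro i _
        rw [hα0]
        simp only [LinearMap.zero_apply]
        rw [kform_zero_zero]
        simp
      have hP30 : P3 = 0 := by
        rw [hP3def]
        apply Finset.sum_eq_zero
        intro i _
        rw [hα0]
        simp only [LinearMap.zero_apply]
        rw [kform_zero_zero]
        simp
      have hP40 : P4 = 0 := by
        rw [hP4def]
        apply Finset.sum_eq_zero
        intro i _
        apply Finset.sum_eq_zero
        intro l _
        have hB : Bmap bil α β (v i) = 0 := by
          unfold Bmap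
          rw [hα0, hβ0]
          simp
        rw [hB]
        simp
      have hP10 : P1 = 0 := by
        rw [hP1def]
        apply Finset.sum_eq_zero
        intro i _
        apply Finset.sum_eq_zero
        intro l _
        have : a2 i l - starRingEnd ℂ (b2 l i) = 0 := by
          show gt.form (v i) (vt l) - starRingEnd ℂ (g.form (vt l) (v i)) = 0
          rw [← g.conj_symm (vt l) (v i), hforms]
          ring
        rw [this]
        simp
      rw [hP10, hP20, hP30, hP40]
      ring

end Stmt10
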